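/- Assume α₂ > α₃ and A > B. Let μ₁ > z₀ be the unique solution of the reduced Dirichlet system with data A, and let μ₂ ≥ 0 satisfy erf(μ₂·√(α₁/α₂)) = H(μ₁). Then for every A∞ > A, erf(μ₂·√(α₁/α₃)) < √(k₃·c₃/(k₂·c₂))·((A−B)/(B−C))·((A∞−B)/(A∞−A))·erf(z₀·√(α₁/α₂)). -/

import Mathlib

noncomputable section

/-- The error function `erf x = (2/√π) ∫₀ˣ exp(−s²) ds`. -/
def erf (x : ℝ) : ℝ := (2 / Real.sqrt Real.pi) * ∫ s in (0:ℝ)..x, Real.exp (-(s^2))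

/-- The complementary error function. -/
def erfc (x : ℝ) : ℝ := 1 - erf x

/-- Physical data of the three-phase Stefan problem: positive thermal conductivities,
specific heats, mass density, latent heats, and temperatures `B > C > D`. -/
structure Params where
  k₁ : ℝ
  k₂ : ℝ
  k₃ : ℝ
  c₁ : ℝ
  c₂ : ℝ
  c₃ : ℝ
  ρ : ℝ
  ℓ₁ : ℝ
  ℓ₂ : ℝ
  B : ℝ
  C : ℝ
  D : ℝ
  hk₁ : 0 < k₁
  hk₂ : 0 < k₂
  hk₃ : 0 < k₃
  hc₁ : 0 < c₁
  hc₂ : 0 < c₂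
  hc₃ : 0 < c₃
  hρ : 0 < ρ
  hℓ₁ : 0 < ℓ₁
  hℓ₂ : 0 < ℓ₂
  hBC : C < B
  hCD : D < C

namespace Params

/-- Thermal diffusivity of phase 1. -/
def α₁ (p : Params) : ℝ := p.k₁ / (p.ρ * p.c₁)

/-- Thermal diffusivity of phase 2. -/
def α₂ (p : Params) : ℝ := p.k₂ / (p.ρ * p.c₂)

/-- Thermal diffusivity of phase 3. -/
def α₃ (p : Params) : ℝ := p.k₃ / (p.ρ * p.c₃)

/-- Stefan number `Ste₁ = c₁(C−D)/ℓ₁`. -/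
def Ste₁ (p : Params) : ℝ := p.c₁ * (p.C - p.D) / p.ℓ₁

/-- Stefan number `Ste₂ = c₂(B−C)/ℓ₂`. -/
def Ste₂ (p : Params) : ℝ := p.c₂ * (p.B - p.C) / p.ℓ₂

/-- `φ(z) = z + (Ste₁/√π) exp(−z²)/erfc(z)`. -/
def φ (p : Params) (z : ℝ) : ℝ :=
  z + (p.Ste₁ / Real.sqrt Real.pi) * Real.exp (-(z^2)) / erfc z

/-- `H(z) = erf(z√(α₁/α₂)) − (Ste₂/√π)(ℓ₂/ℓ₁)√(k₂c₁/(k₁c₂)) exp(−z²α₁/α₂)/φ(z)`. -/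
def H (p : Params) (z : ℝ) : ℝ :=
  erf (z * Real.sqrt (p.α₁ / p.α₂)) -
    (p.Ste₂ / Real.sqrt Real.pi) * (p.ℓ₂ / p.ℓ₁) *
      Real.sqrt (p.k₂ * p.c₁ / (p.k₁ * p.c₂)) *
      (Real.exp (-(z^2) * (p.α₁ / p.α₂)) / p.φ z)

/-- `Q(z) = (ℓ₁/ℓ₂) φ(z) exp(z² α₁/α₂)`. -/
def Q (p : Params) (z : ℝ) : ℝ :=
  (p.ℓ₁ / p.ℓ₂) * p.φ z * Real.exp (z^2 * (p.α₁ / p.α₂))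

/-- The function `T` arising from the Robin (convective) boundary condition with
heat-transfer coefficient `h₀` and bulk temperature `Ainf`. -/
def T (p : Params) (h₀ Ainf : ℝ) (z : ℝ) : ℝ :=
  (p.Ste₂ / (Real.sqrt Real.pi * p.c₂)) * ((Ainf - p.B) / (p.B - p.C)) *
    Real.sqrt (p.k₃ * p.c₁ * p.c₃ / p.k₁) *
    (Real.exp (-(z^2) * p.α₁ * (1 / p.α₃ - 1 / p.α₂)) /
      (p.k₃ / (h₀ * Real.sqrt (Real.pi * p.α₃)) + erf (z * Real.sqrt (p.α₁ / p.α₃)))) -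
  z * Real.exp (z^2 * (p.α₁ / p.α₂))

/-- The function `V` arising from the Dirichlet boundary condition with temperature `A`. -/
def V (p : Params) (A : ℝ) (z : ℝ) : ℝ :=
  ((A - p.B) / p.ℓ₂) * Real.sqrt (p.c₁ * p.c₃ * p.k₃ / (Real.pi * p.k₁)) *
    (Real.exp (-(z^2) * (p.α₁ / p.α₃ - p.α₁ / p.α₂)) / erf (z * Real.sqrt (p.α₁ / p.α₃))) -
  z * Real.exp (z^2 * (p.α₁ / p.α₂))

/-- The function `P` arising from the Neumann boundary condition with flux coefficient `q₀`. -/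
def P (p : Params) (q₀ : ℝ) (z : ℝ) : ℝ :=
  Real.exp (z^2 * (p.α₁ / p.α₂)) *
    (-z + (q₀ / p.ℓ₂) * Real.sqrt (p.c₁ / (p.ρ * p.k₁)) * Real.exp (-(z^2) * (p.α₁ / p.α₃)))

/-- Critical heat-transfer coefficient `h₂`. -/
def h2 (p : Params) (Ainf z₀ : ℝ) : ℝ :=
  ((p.B - p.C) / (Ainf - p.B)) *
    Real.sqrt (p.k₂ * p.k₃ * p.c₂ / (Real.pi * p.c₃ * p.α₃)) *
    (1 / erf (z₀ * Real.sqrt (p.α₁ / p.α₂)))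

/-- Critical heat-flux coefficient `q₂`. -/
def q2 (p : Params) (z₀ : ℝ) : ℝ :=
  p.k₂ * (p.B - p.C) / (Real.sqrt (p.α₂ * Real.pi) * erf (z₀ * Real.sqrt (p.α₁ / p.α₂)))

end Params

/-! Since `H z₀ = 0`, the product `Q z₀ · erf (z₀ √(α₁/α₂))` equals the constant
`κ = (Ste₂/√π) √(k₂c₁/(k₁c₂))`, and `Q` is nondecreasing on `[0, ∞)` because the Mills ratio
`exp (-z²) / erfc z` is (the Gaussian tail beyond `b` is at most `exp (a² - b²)` times the tail
beyond `a`). So `V μ₂ = Q μ₁ ≥ Q z₀ > 0`. For `μ₂ > 0`, multiplying `V μ₂` by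
`erf (μ₂ √(α₁/α₃))` and dropping both its negative term and the factor
`exp (-μ₂² (α₁/α₃ - α₁/α₂)) ≤ 1` leaves
`erf (μ₂ √(α₁/α₃)) · Q z₀ < √(k₃c₃/(k₂c₂)) · (A - B)/(B - C) · κ`, which is the claim with the
factor `(A∞ - B)/(A∞ - A) > 1` replaced by `1`; for `μ₂ ≤ 0` the left side is `≤ 0`. -/

open Real MeasureTheory Set

theorem integrable_exp_neg_sq : Integrable fun s : ℝ => exp (-s ^ 2) := by
  simpa using integrable_exp_neg_mul_sq one_pos

theorem erf_zero : erf 0 = 0 := by simp [erf]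

theorem erf_strictMono : StrictMono erf := fun x y hxy => by
  have hint : 0 < ∫ s in x..y, exp (-s ^ 2) :=
    intervalIntegral.integral_pos hxy (by fun_prop) (fun _ _ => (exp_pos _).le)
      ⟨x, ⟨le_rfl, hxy.le⟩, exp_pos _⟩
  have hsplit := intervalIntegral.integral_interval_sub_left
    (integrable_exp_neg_sq.intervalIntegrable (a := 0) (b := y))
    (integrable_exp_neg_sq.intervalIntegrable (a := 0) (b := x))
  have hc : 0 < 2 / √π := by positivity
  rw [← sub_pos, erf, erf, ← mul_sub, hsplit]
  positivity

theorem erf_pos {x : ℝ} (hx : 0 < x) : 0 < erf x := erf_zero ▸ erf_strictMono hx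

theorem erf_nonpos {x : ℝ} (hx : x ≤ 0) : erf x ≤ 0 := erf_zero ▸ erf_strictMono.monotone hx

theorem erfc_eq_integral_Ioi (x : ℝ) : erfc x = 2 / √π * ∫ s in Ioi x, exp (-s ^ 2) := by
  have hsplit := intervalIntegral.integral_interval_add_Ioi (a := 0) (b := x)
    integrable_exp_neg_sq.integrableOn integrable_exp_neg_sq.integrableOn
  have hhalf : ∫ s in Ioi (0 : ℝ), exp (-s ^ 2) = √π / 2 := by
    simpa using integral_gaussian_Ioi 1
  rw [hhalf] at hsplit
  have : √π ≠ 0 := by positivity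
  rw [erfc, erf, eq_sub_of_add_eq hsplit]
  field_simp
  ring

theorem erfc_pos (x : ℝ) : 0 < erfc x := by
  rw [erfc_eq_integral_Ioi]
  have : 0 < ∫ s in Ioi x, exp (-s ^ 2) := by
    rw [setIntegral_pos_iff_support_of_nonneg_ae
      (Filter.Eventually.of_forall fun s => (exp_pos _).le) integrable_exp_neg_sq.integrableOn]
    simp [Function.support, (exp_pos _).ne']
  positivity

theorem integral_Ioi_exp_neg_sq_le {a b : ℝ} (hab : a ≤ b) :
    ∫ s in Ioi b, exp (-s ^ 2) ≤ exp (a ^ 2 - b ^ 2) * ∫ s in Ioi a, exp (-s ^ 2) := by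
  have hshift : ∫ s in Ioi b, exp (-s ^ 2) = ∫ t in Ioi a, exp (-(t + (b - a)) ^ 2) := by
    rw [← (measurePreserving_add_right volume (b - a)).setIntegral_preimage_emb
      (measurableEmbedding_addRight _), preimage_add_const_Ioi, sub_sub_cancel]
  rw [hshift, ← integral_const_mul]
  refine setIntegral_mono_on (integrable_exp_neg_sq.comp_add_right _).integrableOn
    (integrable_exp_neg_sq.const_mul _).integrableOn measurableSet_Ioi fun t ht => ?_
  rw [← exp_add, exp_le_exp]
  nlinarith [mul_le_mul_of_nonneg_left (le_of_lt ht) (sub_nonneg.mpr hab)]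

theorem monotone_exp_neg_sq_div_erfc : Monotone fun z => exp (-z ^ 2) / erfc z :=
  fun a b hab => by
  rw [div_le_div_iff₀ (erfc_pos a) (erfc_pos b), erfc_eq_integral_Ioi, erfc_eq_integral_Ioi]
  calc exp (-a ^ 2) * (2 / √π * ∫ s in Ioi b, exp (-s ^ 2))
      ≤ exp (-a ^ 2) * (2 / √π * (exp (a ^ 2 - b ^ 2) * ∫ s in Ioi a, exp (-s ^ 2))) := by
        gcongr; exact integral_Ioi_exp_neg_sq_le hab
    _ = exp (-b ^ 2) * (2 / √π * ∫ s in Ioi a, exp (-s ^ 2)) := by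
        rw [show -b ^ 2 = -a ^ 2 + (a ^ 2 - b ^ 2) by ring, exp_add]; ring

theorem sqrt_conductivity_identity {k₁ k₂ k₃ c₁ c₂ c₃ : ℝ} (hk₁ : 0 < k₁) (hk₂ : 0 < k₂)
    (hk₃ : 0 < k₃) (hc₁ : 0 < c₁) (hc₂ : 0 < c₂) (hc₃ : 0 < c₃) :
    √(c₁ * c₃ * k₃ / (π * k₁)) = c₂ * √(k₃ * c₃ / (k₂ * c₂)) * √(k₂ * c₁ / (k₁ * c₂)) / √π := by
  nth_rw 1 [← sqrt_sq hc₂.le]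
  rw [← sqrt_mul (sq_nonneg _), ← sqrt_mul (by positivity),
    ← sqrt_div' _ pi_pos.le]
  congr 1
  field_simp

namespace Params

variable (p : Params)

theorem α₁_pos : 0 < p.α₁ := div_pos p.hk₁ (mul_pos p.hρ p.hc₁)

theorem α₂_pos : 0 < p.α₂ := div_pos p.hk₂ (mul_pos p.hρ p.hc₂)

theorem α₃_pos : 0 < p.α₃ := div_pos p.hk₃ (mul_pos p.hρ p.hc₃)

theorem Ste₁_pos : 0 < p.Ste₁ := div_pos (mul_pos p.hc₁ (sub_pos.2 p.hCD)) p.hℓ₁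

theorem monotone_φ : Monotone p.φ := fun a b hab => by
  have hmills := monotone_exp_neg_sq_div_erfc hab
  have hSte : 0 ≤ p.Ste₁ / √π := (div_pos p.Ste₁_pos (by positivity)).le
  simp only [φ, mul_div_assoc]
  gcongr

theorem φ_pos {z : ℝ} (hz : 0 ≤ z) : 0 < p.φ z := by
  have : 0 < p.Ste₁ / √π * exp (-z ^ 2) / erfc z :=
    div_pos (mul_pos (div_pos p.Ste₁_pos (by positivity)) (exp_pos _)) (erfc_pos z)
  rw [φ]
  linarith

theorem Q_pos {z : ℝ} (hz : 0 ≤ z) : 0 < p.Q z :=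
  mul_pos (mul_pos (div_pos p.hℓ₁ p.hℓ₂) (p.φ_pos hz)) (exp_pos _)

theorem monotoneOn_Q : MonotoneOn p.Q (Ici 0) := fun a ha b _ hab => by
  have hℓ : 0 < p.ℓ₁ / p.ℓ₂ := div_pos p.hℓ₁ p.hℓ₂
  have hφ := p.φ_pos (ha.trans hab)
  have hα := div_pos p.α₁_pos p.α₂_pos
  have hsq : a ^ 2 ≤ b ^ 2 := pow_le_pow_left₀ ha hab 2
  unfold Q
  gcongr
  exact p.monotone_φ hab

theorem Q_mul_erf_of_H_eq_zero {z : ℝ} (hz : 0 ≤ z) (hH : p.H z = 0) :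
    p.Q z * erf (z * √(p.α₁ / p.α₂)) =
      p.Ste₂ / √π * √(p.k₂ * p.c₁ / (p.k₁ * p.c₂)) := by
  rw [H, sub_eq_zero] at hH
  have hφ := (p.φ_pos hz).ne'
  have := p.hℓ₁.ne'
  have := p.hℓ₂.ne'
  rw [Q, hH, neg_mul, exp_neg]
  field_simp

theorem sqrt_div_ℓ₂_eq :
    √(p.c₁ * p.c₃ * p.k₃ / (π * p.k₁)) / p.ℓ₂ =
      √(p.k₃ * p.c₃ / (p.k₂ * p.c₂)) / (p.B - p.C) *
        (p.Ste₂ / √π * √(p.k₂ * p.c₁ / (p.k₁ * p.c₂))) := by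
  have := p.hℓ₂.ne'
  have := (sub_pos.2 p.hBC).ne'
  rw [sqrt_conductivity_identity p.hk₁ p.hk₂ p.hk₃ p.hc₁ p.hc₂ p.hc₃, Ste₂]
  field_simp

theorem erf_mul_V_lt {A μ : ℝ} (hα : p.α₃ ≤ p.α₂) (hA : p.B ≤ A) (hμ : 0 < μ) :
    erf (μ * √(p.α₁ / p.α₃)) * p.V A μ <
      √(p.k₃ * p.c₃ / (p.k₂ * p.c₂)) * ((A - p.B) / (p.B - p.C)) *
        (p.Ste₂ / √π * √(p.k₂ * p.c₁ / (p.k₁ * p.c₂))) := by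
  have hE : 0 < erf (μ * √(p.α₁ / p.α₃)) :=
    erf_pos (mul_pos hμ (sqrt_pos.2 (div_pos p.α₁_pos p.α₃_pos)))
  have hX : exp (-μ ^ 2 * (p.α₁ / p.α₃ - p.α₁ / p.α₂)) ≤ 1 := by
    have : p.α₁ / p.α₂ ≤ p.α₁ / p.α₃ := div_le_div_of_nonneg_left p.α₁_pos.le p.α₃_pos hα
    rw [exp_le_one_iff, neg_mul]
    exact neg_nonpos.2 (mul_nonneg (sq_nonneg μ) (sub_nonneg.2 this))
  have hK : 0 ≤ (A - p.B) / p.ℓ₂ * √(p.c₁ * p.c₃ * p.k₃ / (π * p.k₁)) :=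
    mul_nonneg (div_nonneg (sub_nonneg.2 hA) p.hℓ₂.le) (sqrt_nonneg _)
  calc erf (μ * √(p.α₁ / p.α₃)) * p.V A μ
      = (A - p.B) / p.ℓ₂ * √(p.c₁ * p.c₃ * p.k₃ / (π * p.k₁)) *
            exp (-μ ^ 2 * (p.α₁ / p.α₃ - p.α₁ / p.α₂)) -
          erf (μ * √(p.α₁ / p.α₃)) * (μ * exp (μ ^ 2 * (p.α₁ / p.α₂))) := by
        rw [V]; field_simp
    _ < (A - p.B) / p.ℓ₂ * √(p.c₁ * p.c₃ * p.k₃ / (π * p.k₁)) *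
          exp (-μ ^ 2 * (p.α₁ / p.α₃ - p.α₁ / p.α₂)) := sub_lt_self _ (by positivity)
    _ ≤ (A - p.B) / p.ℓ₂ * √(p.c₁ * p.c₃ * p.k₃ / (π * p.k₁)) := mul_le_of_le_one_right hK hX
    _ = _ := by rw [div_mul_eq_mul_div, mul_div_assoc, p.sqrt_div_ℓ₂_eq]; ring

end Params

theorem dirichlet_mu2_bound_Ainf_general (p : Params) (A z₀ μ₁ μ₂ : ℝ)
    (hα : p.α₃ < p.α₂) (hA : p.B < A)
    (hz₀ : 0 < z₀ ∧ p.H z₀ = 0)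
    (hμ₁ : z₀ < μ₁)
    (hsys : p.Q μ₁ = p.V A μ₂) :
    ∀ Ainf : ℝ, A < Ainf →
      erf (μ₂ * Real.sqrt (p.α₁ / p.α₃)) <
        Real.sqrt (p.k₃ * p.c₃ / (p.k₂ * p.c₂)) * ((A - p.B) / (p.B - p.C)) *
          ((Ainf - p.B) / (Ainf - A)) * erf (z₀ * Real.sqrt (p.α₁ / p.α₂)) := by
  intro Ainf hAinf
  obtain ⟨hz₀, hHz₀⟩ := hz₀
  set κ := p.Ste₂ / √π * √(p.k₂ * p.c₁ / (p.k₁ * p.c₂))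
  set S := √(p.k₃ * p.c₃ / (p.k₂ * p.c₂)) * ((A - p.B) / (p.B - p.C))
  set E₀ := erf (z₀ * √(p.α₁ / p.α₂))
  set E₂ := erf (μ₂ * √(p.α₁ / p.α₃))
  have hE₀ : 0 < E₀ := erf_pos (mul_pos hz₀ (sqrt_pos.2 (div_pos p.α₁_pos p.α₂_pos)))
  have hS : 0 < S := mul_pos (sqrt_pos.2 (div_pos (mul_pos p.hk₃ p.hc₃) (mul_pos p.hk₂ p.hc₂)))
    (div_pos (sub_pos.2 hA) (sub_pos.2 p.hBC))
  have hQ₀ : p.Q z₀ * E₀ = κ := p.Q_mul_erf_of_H_eq_zero hz₀.le hHz₀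
  have hbound : E₂ < S * E₀ := by
    rcases le_or_gt μ₂ 0 with hμ₂ | hμ₂
    · exact (erf_nonpos (mul_nonpos_of_nonpos_of_nonneg hμ₂ (sqrt_nonneg _))).trans_lt
        (mul_pos hS hE₀)
    have hE₂ : 0 < E₂ := erf_pos (mul_pos hμ₂ (sqrt_pos.2 (div_pos p.α₁_pos p.α₃_pos)))
    have hQ : p.Q z₀ ≤ p.V A μ₂ := hsys ▸ p.monotoneOn_Q hz₀.le (hz₀.le.trans hμ₁.le) hμ₁.le
    refine lt_of_mul_lt_mul_right ?_ (p.Q_pos hz₀.le).le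
    calc E₂ * p.Q z₀ ≤ E₂ * p.V A μ₂ := mul_le_mul_of_nonneg_left hQ hE₂.le
      _ < S * κ := p.erf_mul_V_lt hα.le hA.le hμ₂
      _ = S * E₀ * p.Q z₀ := by rw [← hQ₀]; ring
  have hfactor : 1 < (Ainf - p.B) / (Ainf - A) := by
    rw [one_lt_div (sub_pos.2 hAinf)]; linarith
  calc E₂ < S * E₀ := hbound
    _ < S * ((Ainf - p.B) / (Ainf - A)) * E₀ := by
      gcongr; exact lt_mul_of_one_lt_right hS hfactor

/-- bound on `erf(μ₂√(α₁/α₃))` for the Dirichlet solution, for every `A∞ > A`. -/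
theorem dirichlet_mu2_bound_Ainf (p : Params) (A z₀ μ₁ μ₂ : ℝ)
    (hα : p.α₃ < p.α₂) (hA : p.B < A)
    (hz₀ : 0 < z₀ ∧ p.H z₀ = 0)
    (hμ₁ : z₀ < μ₁) (hμ₂ : 0 ≤ μ₂)
    (herf : erf (μ₂ * Real.sqrt (p.α₁ / p.α₂)) = p.H μ₁)
    (hsys : p.Q μ₁ = p.V A μ₂) :
    ∀ Ainf : ℝ, A < Ainf →
      erf (μ₂ * Real.sqrt (p.α₁ / p.α₃)) <
        Real.sqrt (p.k₃ * p.c₃ / (p.k₂ * p.c₂)) * ((A - p.B) / (p.B - p.C)) *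
          ((Ainf - p.B) / (Ainf - A)) * erf (z₀ * Real.sqrt (p.α₁ / p.α₂)) :=
  dirichlet_mu2_bound_Ainf_general p A z₀ μ₁ μ₂ hα hA hz₀ hμ₁ hsys
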